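/- Let K ≥ 2, θ_1,…,θ_K ∈ (0,1) with θ_1 > θ_2, ε ∈ [0,1/2), c ∈ ℝ, and set μ* := μ((1,2)) = −c + (1−ε)θ_1 + p0(θ_1)θ_2; note p0(θ_1) > 0. Then for all k, ℓ, m ∈ {2,…,K} with ℓ ≠ k and m ≠ k: (μ* − μ((k,ℓ,m))) − (μ* − μ((k,1,1))) − ((1−p0(θ_k))/p0(θ_1))·(μ* − μ((1,1,ℓ))) − (p0(θ_k)/p0(θ_1))·(μ* − μ((1,1,m))) = θ_1 − θ_2 > 0. -/

import Mathlib

noncomputable section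

/-- `p0 ε x = ε x + (1−ε)(1−x)`: probability that the ε-noisy measurement of a
Bernoulli(x) arm returns 0. -/
def p0 (ε x : ℝ) : ℝ := ε * x + (1 - ε) * (1 - x)

/-- A static policy: either play arm `k` directly, or measure arm `k` and play
arm `l` if the measurement is 1 and arm `m` if it is 0. -/
inductive Policy where
  | play (k : ℕ)
  | meas (k l m : ℕ)
deriving DecidableEq

/-- Mean reward `μ(u)` of a static policy `u`, with arm means `θ`, noise level `ε`,
and measurement cost `c`. -/
def reward (θ : ℕ → ℝ) (ε c : ℝ) : Policy → ℝ
  | .play k => θ k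
  | .meas k l m =>
      -c + (if l = k then (1 - ε) * θ k else (1 - p0 ε (θ k)) * θ l)
         + (if m = k then ε * θ k else p0 ε (θ k) * θ m)

/-!
Against `μ*`, the policy `(1,1,ℓ)` loses exactly `p0(θ_1)(θ_2 − θ_ℓ)`, so the division by `p0(θ_1)`
cancels and the two weighted terms add up to `θ_2 − c − μ((k,ℓ,m))`, because `(k,ℓ,m)` plays `ℓ` and
`m` with probabilities `1 − p0(θ_k)` and `p0(θ_k)`. Since `μ((k,1,1)) = θ_1 − c`, what remains is
`θ_1 − θ_2`.
-/

lemma p0_pos {ε x : ℝ} (hε0 : 0 ≤ ε) (hε1 : ε ≤ 1) (hx0 : 0 < x) (hx1 : x < 1) :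
    0 < p0 ε x := by
  unfold p0
  -- `p0 ε x ≥ x (1 − x)`, the surplus being `ε x² + (1 − ε)(1 − x)²`
  nlinarith [mul_pos hx0 (sub_pos.2 hx1), mul_nonneg hε0 (sq_nonneg x),
    mul_nonneg (sub_nonneg.2 hε1) (sq_nonneg (1 - x))]

section reward

variable (θ : ℕ → ℝ) (ε c : ℝ) {k l m : ℕ}

lemma reward_meas_of_ne (hl : l ≠ k) (hm : m ≠ k) :
    reward θ ε c (.meas k l m) = -c + (1 - p0 ε (θ k)) * θ l + p0 ε (θ k) * θ m := by
  simp only [reward, if_neg hl, if_neg hm]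

lemma sub_reward_meas_self_of_ne (j : ℕ) (hm : m ≠ k) :
    (-c + (1 - ε) * θ k + p0 ε (θ k) * θ j) - reward θ ε c (.meas k k m)
      = p0 ε (θ k) * (θ j - θ m) := by
  simp only [reward, ↓reduceIte, if_neg hm]
  ring

end reward

/-- Exchange identity used in the proof of Theorem 2: with
`μ* := μ((1,2)) = −c + (1−ε)θ_1 + p0(θ_1)θ_2` (and `p0(θ_1) > 0`), for all
`k, ℓ, m ∈ {2,…,K}` with `ℓ ≠ k` and `m ≠ k`:
`(μ*−μ((k,ℓ,m))) − (μ*−μ((k,1,1))) − ((1−p0(θ_k))/p0(θ_1))(μ*−μ((1,1,ℓ)))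
  − (p0(θ_k)/p0(θ_1))(μ*−μ((1,1,m))) = θ_1 − θ_2 > 0`. -/
theorem stmt10 (K : ℕ) (hK : 2 ≤ K) (θ : ℕ → ℝ)
    (hθ : ∀ i, 1 ≤ i → i ≤ K → θ i ∈ Set.Ioo (0 : ℝ) 1)
    (h21 : θ 2 < θ 1)
    (ε c : ℝ) (hε0 : 0 ≤ ε) (hε : ε < 1 / 2) :
    let μstar := -c + (1 - ε) * θ 1 + p0 ε (θ 1) * θ 2
    0 < p0 ε (θ 1) ∧
    (∀ k l m : ℕ, 2 ≤ k → k ≤ K → 2 ≤ l → l ≤ K → 2 ≤ m → m ≤ K →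
      l ≠ k → m ≠ k →
      (μstar - reward θ ε c (.meas k l m))
        - (μstar - reward θ ε c (.meas k 1 1))
        - ((1 - p0 ε (θ k)) / p0 ε (θ 1)) * (μstar - reward θ ε c (.meas 1 1 l))
        - (p0 ε (θ k) / p0 ε (θ 1)) * (μstar - reward θ ε c (.meas 1 1 m))
      = θ 1 - θ 2) ∧
    0 < θ 1 - θ 2 := by
  intro μstar
  have hθ1 := hθ 1 le_rfl (one_le_two.trans hK)
  have hp : 0 < p0 ε (θ 1) := p0_pos hε0 (by linarith) hθ1.1 hθ1.2
  refine ⟨hp, fun k l m hk2 _ hl2 _ hm2 _ hlk hmk => ?_, sub_pos.2 h21⟩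
  have hk1 : (1 : ℕ) ≠ k := by omega
  rw [sub_reward_meas_self_of_ne θ ε c 2 (by omega : l ≠ 1),
    sub_reward_meas_self_of_ne θ ε c 2 (by omega : m ≠ 1),
    reward_meas_of_ne θ ε c hlk hmk, reward_meas_of_ne θ ε c hk1 hk1]
  field_simp
  ring
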